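/- The Diversity Owen value is the unique value on the class GD of TU-games with diversity constraints that satisfies Efficiency, Weak intra-coalitional balanced contributions with out players for preserving diversity, Equality through diversity, and Independence from Non-Diverse Coalitions. -/

import Mathlib

open Finset
open scoped Classical

/-- A TU-game with diversity constraints `(N, v, 𝓑, d)` (data only);
the components `B 0, …, B (m-1)` are indexed by `Fin m`. -/
structure DivGame where
  m : ℕ
  N : Finset ℕ
  v : Finset ℕ → ℝ
  B : Fin m → Finset ℕ
  d : Fin m → ℕ

/-- Membership in the class `GD` of TU-games with diversity constraints:
`v ∅ = 0`, `𝓑` is a partition of `N` into components, and `1 ≤ d k ≤ |B k|`. -/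
def IsGD (G : DivGame) : Prop :=
  G.v ∅ = 0 ∧
  (∀ k, G.B k ⊆ G.N) ∧
  (∀ i ∈ G.N, ∃! k, i ∈ G.B k) ∧
  (∀ k, 1 ≤ G.d k ∧ G.d k ≤ (G.B k).card)

/-- `S` is a diverse coalition: `|S ∩ B k| ≥ d k` for every component index `k`. -/
def DiverseCoal (G : DivGame) (S : Finset ℕ) : Prop :=
  ∀ k, G.d k ≤ (S ∩ G.B k).card

/-- The diversity-restricted game `v^d`. -/
noncomputable def restrictedGame (G : DivGame) : Finset ℕ → ℝ :=
  fun S => if DiverseCoal G S then G.v S else 0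

/-- The Owen value of player `i` in the game `v` with coalition structure `B` on `Fin m`. -/
noncomputable def Owen (m : ℕ) (v : Finset ℕ → ℝ) (B : Fin m → Finset ℕ) (i : ℕ) : ℝ :=
  ∑ k ∈ univ.filter (fun k => i ∈ B k),
    ∑ R ∈ ((univ : Finset (Fin m)).erase k).powerset,
      ∑ S ∈ ((B k).erase i).powerset,
        ((R.card.factorial * (m - R.card - 1).factorial : ℝ) / m.factorial) *
          ((S.card.factorial * ((B k).card - S.card - 1).factorial : ℝ) /
            (B k).card.factorial) *
          (v (R.biUnion B ∪ S ∪ {i}) - v (R.biUnion B ∪ S))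

/-- The Diversity Owen value: `DOw (N,v,𝓑,d) = Ow (N, v^d, 𝓑)`. -/
noncomputable def DOw (G : DivGame) : ℕ → ℝ :=
  Owen G.m (restrictedGame G) G.B

/-- The game on the same `(N, 𝓑, d)` with characteristic function `v`. -/
def gameWith (G : DivGame) (v : Finset ℕ → ℝ) : DivGame := { G with v := v }

/-- The induced subgame `(N \ {i}, v|_{N\{i}}, 𝓑|_{N\{i}}, d)` obtained by removing player `i`. -/
def dropPlayer (G : DivGame) (i : ℕ) : DivGame :=
  { G with N := G.N.erase i, B := fun k => (G.B k).erase i }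

/-- Player `i` is null in `v` (on player set `N`): `v (S ∪ {i}) = v S` for all `S ⊆ N \ {i}`. -/
def NullPlayerIn (v : Finset ℕ → ℝ) (N : Finset ℕ) (i : ℕ) : Prop :=
  ∀ S ⊆ N.erase i, v (insert i S) = v S

/-- Players `i` and `j` are symmetric in `v` (on player set `N`). -/
def SymmetricIn (v : Finset ℕ → ℝ) (N : Finset ℕ) (i j : ℕ) : Prop :=
  ∀ S ⊆ N \ {i, j}, v (insert i S) - v S = v (insert j S) - v S

/-- The game is diverse: `v S ≠ 0` implies `S` is a diverse coalition. -/
def IsDiverseGame (G : DivGame) : Prop :=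
  ∀ S ⊆ G.N, G.v S ≠ 0 → DiverseCoal G S

/-- Player `i` is an out player: `i ∈ B k` with `|B k| - d k ≥ 1`. -/
def OutPlayer (G : DivGame) (i : ℕ) : Prop :=
  ∃ k, i ∈ G.B k ∧ G.d k < (G.B k).card

/-- The game is `i`-out diverse: diverse and `i` is an out player. -/
def IOutDiverse (G : DivGame) (i : ℕ) : Prop :=
  IsDiverseGame G ∧ OutPlayer G i

/-- A value on `GD`. -/
abbrev Value := DivGame → ℕ → ℝ

/-- Efficiency (E). -/
def Efficiency (f : Value) : Prop :=
  ∀ G, IsGD G → ∑ i ∈ G.N, f G i = G.v G.N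

/-- Null Player Out for Preserving-Diversity Games (NPOPD). -/
def NPOPD (f : Value) : Prop :=
  ∀ G, IsGD G → ∀ i, IOutDiverse G i → NullPlayerIn G.v G.N i →
    ∀ j ∈ G.N.erase i, f G j = f (dropPlayer G i) j

/-- Fairness within Component (FwC). -/
def FwC (f : Value) : Prop :=
  ∀ G : DivGame, ∀ v w : Finset ℕ → ℝ,
    IsGD (gameWith G v) → IsGD (gameWith G w) →
    ∀ p : Fin G.m, ∀ i ∈ G.B p, ∀ j ∈ G.B p, SymmetricIn v G.N i j →
      f (gameWith G (v + w)) i - f (gameWith G w) i =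
        f (gameWith G (v + w)) j - f (gameWith G w) j

/-- Fairness through Diversity (FD). -/
def FD (f : Value) : Prop :=
  ∀ G : DivGame, ∀ v w : Finset ℕ → ℝ,
    IsGD (gameWith G v) → IsGD (gameWith G w) →
    ∀ p q : Fin G.m,
      (∑ i ∈ G.B p, f (gameWith G (v + w)) i) - (∑ i ∈ G.B p, f (gameWith G w) i) =
        (∑ i ∈ G.B q, f (gameWith G (v + w)) i) - (∑ i ∈ G.B q, f (gameWith G w) i)

/-- Independence from Non-Diverse Coalitions (INDC). -/
def INDC (f : Value) : Prop :=
  ∀ G : DivGame, ∀ v w : Finset ℕ → ℝ,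
    IsGD (gameWith G v) → IsGD (gameWith G w) →
    (∀ S ⊆ G.N, DiverseCoal G S → v S = w S) →
    ∀ i ∈ G.N, f (gameWith G v) i = f (gameWith G w) i

/-- Equality through diversity (ED). -/
def ED (f : Value) : Prop :=
  ∀ G, IsGD G → ∀ k q : Fin G.m, ∑ i ∈ G.B k, f G i = ∑ i ∈ G.B q, f G i

/-- Null Player for Diverse Games (ND). -/
def ND (f : Value) : Prop :=
  ∀ G, IsGD G → IsDiverseGame G → ∀ i ∈ G.N, NullPlayerIn G.v G.N i → f G i = 0

/-- Intra-coalitional balanced contributions with out players for preserving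
diversity (IBCOPPD). -/
def IBCOPPD (f : Value) : Prop :=
  ∀ G, IsGD G → IsDiverseGame G →
    ∀ p : Fin G.m, ∀ i ∈ G.B p, ∀ j ∈ G.B p, i ≠ j → G.d p < (G.B p).card →
      (f G i - f (dropPlayer G j) i = f G j - f (dropPlayer G i) j) ∧
      (NullPlayerIn (dropPlayer G j).v (dropPlayer G j).N i → f (dropPlayer G j) i = 0) ∧
      (NullPlayerIn (dropPlayer G i).v (dropPlayer G i).N j → f (dropPlayer G i) j = 0)

/-- Weak intra-coalitional balanced contributions with out players for preserving
diversity (IBCOPPD⁻). -/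
def IBCOPPDweak (f : Value) : Prop :=
  (∀ G, IsGD G → IsDiverseGame G →
    ∀ p : Fin G.m, ∀ i ∈ G.B p, ∀ j ∈ G.B p, i ≠ j → G.d p < (G.B p).card →
      f G i - f (dropPlayer G j) i = f G j - f (dropPlayer G i) j) ∧
  (∀ G, IsGD G → G.v = (fun _ => 0) → ∀ k ∈ G.N, f G k = 0)

/-- The extended game `(N ∪ {l}, (v)₊ₗ, 𝓑₊ₗ, d)` obtained by adding an
outside player `l` to the component `B k`. -/
def addPlayer (G : DivGame) (k : Fin G.m) (l : ℕ) : DivGame :=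
  { m := G.m
    N := insert l G.N
    v := fun S => G.v (S.erase l)
    B := fun k' => if k' = k then insert l (G.B k) else G.B k'
    d := G.d }


/-! ### Auxiliary: Shapley machinery -/

noncomputable def sh (n s : ℕ) : ℝ :=
  (s.factorial * (n - s - 1).factorial : ℝ) / n.factorial

noncomputable def ShVal (T : Finset ℕ) (W : Finset ℕ → ℝ) (i : ℕ) : ℝ :=
  ∑ S ∈ (T.erase i).powerset, sh T.card S.card * (W (insert i S) - W S)

lemma fact_cast_pos (n : ℕ) : (0:ℝ) < n.factorial := by
  exact_mod_cast n.factorial_pos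

lemma fact_cast_ne (n : ℕ) : (n.factorial : ℝ) ≠ 0 := (fact_cast_pos n).ne'

lemma sh_succ_add {n s : ℕ} (h : s + 2 ≤ n) : sh n s + sh n (s+1) = sh (n-1) s := by
  obtain ⟨a, rfl⟩ : ∃ a, n = s + 2 + a := ⟨n - (s+2), by omega⟩
  have h1 : s + 2 + a - s - 1 = a + 1 := by omega
  have h2 : s + 2 + a - (s+1) - 1 = a := by omega
  have h3 : s + 2 + a - 1 = s + 1 + a := by omega
  have h4 : s + 1 + a - s - 1 = a := by omega
  simp only [sh, h1, h2, h3, h4]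
  have h5 : (s + 2 + a).factorial = (s + 1 + a + 1) * (s + 1 + a).factorial := by
    rw [show s + 2 + a = s + 1 + a + 1 by omega, Nat.factorial_succ]
  rw [h5, Nat.factorial_succ a, Nat.factorial_succ s]
  have e1 := fact_cast_ne (s + 1 + a)
  have e2 := fact_cast_ne s
  have e3 := fact_cast_ne a
  push_cast
  field_simp
  ring

lemma sh_top {n : ℕ} (h : 1 ≤ n) : (n : ℝ) * sh n (n-1) = 1 := by
  have h1 : n - (n-1) - 1 = 0 := by omega
  simp only [sh, h1, Nat.factorial_zero]
  have h2 : (n : ℝ) * (n-1).factorial = n.factorial := by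
    exact_mod_cast Nat.mul_factorial_pred (by omega)
  push_cast
  field_simp
  linarith

lemma sh_zero {n : ℕ} (h : 1 ≤ n) : (n : ℝ) * sh n 0 = 1 := by
  simp only [sh, Nat.factorial_zero, Nat.sub_zero]
  have h2 : (n : ℝ) * (n-1).factorial = n.factorial := by
    exact_mod_cast Nat.mul_factorial_pred (by omega)
  push_cast
  field_simp
  linarith

lemma sh_mid {n u : ℕ} (h1 : 1 ≤ u) (h2 : u < n) :
    (u:ℝ) * sh n (u-1) = ((n:ℝ) - u) * sh n u := by
  obtain ⟨b, rfl⟩ : ∃ b, n = u + 1 + b := ⟨n - (u+1), by omega⟩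
  have e1 : u + 1 + b - (u - 1) - 1 = b + 1 := by omega
  have e2 : u + 1 + b - u - 1 = b := by omega
  simp only [sh, e1, e2]
  have e3 : u.factorial = u * (u-1).factorial := by
    exact (Nat.mul_factorial_pred (by omega)).symm
  rw [Nat.factorial_succ b, e3]
  have f1 := fact_cast_ne (u + 1 + b)
  push_cast
  field_simp
  ring

lemma shapley_eff (T : Finset ℕ) (W : Finset ℕ → ℝ) :
    ∑ i ∈ T, ShVal T W i = W T - W ∅ := by
  rcases T.eq_empty_or_nonempty with rfl | hT
  · simp [ShVal]
  have hn : 1 ≤ T.card := Finset.card_pos.mpr hT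
  set n := T.card with hndef
  set g : Finset ℕ → ℝ := fun U => sh n (U.card - 1) * W U with hg
  have h1 : ∀ i : ℕ, (T.erase i).powerset = T.powerset.filter (fun S => i ∉ S) := by
    intro i; ext S
    simp [Finset.mem_powerset, Finset.subset_erase, Finset.mem_filter, and_comm]
  have step1 : ∑ i ∈ T, ShVal T W i
      = ∑ S ∈ T.powerset, ∑ i ∈ T \ S, sh n S.card * (W (insert i S) - W S) := by
    simp only [ShVal]
    rw [Finset.sum_comm' (s := T) (t := fun i => (T.erase i).powerset)
        (t' := T.powerset) (s' := fun S => T \ S)]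
    intro i S
    simp only [h1, Finset.mem_filter, Finset.mem_sdiff, Finset.mem_powerset]
    tauto
  have step2 : ∀ S ∈ T.powerset,
      ∑ i ∈ T \ S, sh n S.card * (W (insert i S) - W S)
      = (∑ i ∈ T \ S, g (insert i S)) - ((n:ℝ) - S.card) * (sh n S.card * W S) := by
    intro S hS
    rw [Finset.mem_powerset] at hS
    have hcardsd : (T \ S).card = n - S.card := Finset.card_sdiff_of_subset hS
    have hterm : ∀ i ∈ T \ S, sh n S.card * (W (insert i S) - W S)
        = g (insert i S) - sh n S.card * W S := by
      intro i hi
      have hiS : i ∉ S := (Finset.mem_sdiff.mp hi).2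
      simp only [hg, Finset.card_insert_of_notMem hiS, Nat.add_sub_cancel]
      ring
    rw [Finset.sum_congr rfl hterm, Finset.sum_sub_distrib, Finset.sum_const, hcardsd,
      nsmul_eq_mul]
    have hc : ((n - S.card : ℕ) : ℝ) = (n:ℝ) - S.card := by
      have := Finset.card_le_card hS
      exact Nat.cast_sub (show S.card ≤ n from this)
    rw [hc]
  have key : ∑ S ∈ T.powerset, ∑ i ∈ T \ S, g (insert i S)
      = ∑ U ∈ T.powerset, (U.card : ℝ) * g U := by
    have rhs : ∀ U ∈ T.powerset, (U.card : ℝ) * g U = ∑ _j ∈ U, g U := by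
      intro U _; rw [Finset.sum_const, nsmul_eq_mul]
    rw [Finset.sum_congr rfl rhs, Finset.sum_sigma', Finset.sum_sigma']
    refine Finset.sum_nbij' (fun x => ⟨insert x.2 x.1, x.2⟩) (fun y => ⟨y.1.erase y.2, y.2⟩)
      ?_ ?_ ?_ ?_ ?_
    · rintro ⟨S, i⟩ hx
      simp only [Finset.mem_sigma, Finset.mem_powerset, Finset.mem_sdiff] at hx ⊢
      exact ⟨Finset.insert_subset hx.2.1 hx.1, Finset.mem_insert_self _ _⟩
    · rintro ⟨U, j⟩ hy
      simp only [Finset.mem_sigma, Finset.mem_powerset, Finset.mem_sdiff] at hy ⊢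
      exact ⟨(Finset.erase_subset _ _).trans hy.1,
        hy.1 hy.2, Finset.notMem_erase _ _⟩
    · rintro ⟨S, i⟩ hx
      simp only [Finset.mem_sigma, Finset.mem_powerset, Finset.mem_sdiff] at hx
      simp [Finset.erase_insert hx.2.2]
    · rintro ⟨U, j⟩ hy
      simp only [Finset.mem_sigma, Finset.mem_powerset] at hy
      simp [Finset.insert_erase hy.2]
    · rintro ⟨S, i⟩ _; rfl
  have coef : ∀ U ∈ T.powerset,
      (U.card : ℝ) * g U - ((n:ℝ) - U.card) * (sh n U.card * W U)
      = (if U = T then W T else 0) + (if U = ∅ then -(W ∅) else 0) := by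
    intro U hU
    rw [Finset.mem_powerset] at hU
    rcases Finset.eq_empty_or_nonempty U with rfl | hUne
    · have hne : (∅ : Finset ℕ) ≠ T := fun h => hT.ne_empty h.symm
      simp only [hg, Finset.card_empty, if_neg hne, if_pos rfl]
      push_cast
      linear_combination (-(W ∅)) * sh_zero hn
    · have hu1 : 1 ≤ U.card := Finset.card_pos.mpr hUne
      by_cases hUT : U = T
      · have hcard : U.card = n := by rw [hUT]
        rw [if_pos hUT, if_neg hUne.ne_empty, ← hUT]
        simp only [hg, hcard]
        linear_combination (W U) * sh_top hn
      · have hlt : U.card < n := Finset.card_lt_card (hU.ssubset_of_ne hUT)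
        rw [if_neg hUT, if_neg hUne.ne_empty]
        simp only [hg]
        linear_combination (W U) * sh_mid hu1 hlt
  rw [step1, Finset.sum_congr rfl step2, Finset.sum_sub_distrib, key,
    ← Finset.sum_sub_distrib, Finset.sum_congr rfl coef, Finset.sum_add_distrib,
    Finset.sum_ite_eq' T.powerset T (fun _ => W T),
    Finset.sum_ite_eq' T.powerset ∅ (fun _ => -(W ∅))]
  simp only [if_pos (Finset.mem_powerset_self T), if_pos (Finset.empty_mem_powerset T)]
  ring


lemma sh_bc (T : Finset ℕ) (W : Finset ℕ → ℝ) {i j : ℕ}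
    (hi : i ∈ T) (hj : j ∈ T) (hij : i ≠ j) :
    ShVal T W i - ShVal (T.erase j) W i = ShVal T W j - ShVal (T.erase i) W j := by
  classical
  set n := T.card with hndef
  set T' : Finset ℕ := (T.erase i).erase j with hT'
  have hiT' : i ∉ T' := fun h => (Finset.notMem_erase i T) (Finset.mem_of_mem_erase h)
  have hjT' : j ∉ T' := Finset.notMem_erase j _
  have hcomm : (T.erase j).erase i = T' := Finset.erase_right_comm
  have hins_i : T.erase i = insert j T' := by
    rw [hT', Finset.insert_erase (Finset.mem_erase.mpr ⟨hij.symm, hj⟩)]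
  have hins_j : T.erase j = insert i T' := by
    rw [← hcomm, Finset.insert_erase (Finset.mem_erase.mpr ⟨hij, hi⟩)]
  have hcardj : (T.erase j).card = n - 1 := Finset.card_erase_of_mem hj
  have hcardi : (T.erase i).card = n - 1 := Finset.card_erase_of_mem hi
  have hn2 : 2 ≤ n := Finset.one_lt_card.mpr ⟨i, hi, j, hj, hij⟩
  have hcardT' : T'.card + 2 = n := by
    rw [hT', Finset.card_erase_of_mem (Finset.mem_erase.mpr ⟨hij.symm, hj⟩), hcardi]
    omega
  have e1 : ShVal T W i = ∑ S ∈ T'.powerset,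
      (sh n S.card * (W (insert i S) - W S)
        + sh n (S.card + 1) * (W (insert i (insert j S)) - W (insert j S))) := by
    unfold ShVal
    rw [hins_i, Finset.sum_powerset_insert hjT', ← Finset.sum_add_distrib]
    refine Finset.sum_congr rfl fun S hS => ?_
    have hjS : j ∉ S := fun h => hjT' (Finset.mem_powerset.mp hS h)
    rw [Finset.card_insert_of_notMem hjS, ← hndef]
  have e2 : ShVal (T.erase j) W i = ∑ S ∈ T'.powerset,
      sh (n-1) S.card * (W (insert i S) - W S) := by
    unfold ShVal
    rw [hcomm, hcardj]
  have e3 : ShVal T W j = ∑ S ∈ T'.powerset,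
      (sh n S.card * (W (insert j S) - W S)
        + sh n (S.card + 1) * (W (insert i (insert j S)) - W (insert i S))) := by
    unfold ShVal
    rw [hins_j, Finset.sum_powerset_insert hiT', ← Finset.sum_add_distrib]
    refine Finset.sum_congr rfl fun S hS => ?_
    have hiS : i ∉ S := fun h => hiT' (Finset.mem_powerset.mp hS h)
    rw [Finset.card_insert_of_notMem hiS, Finset.insert_comm, ← hndef]
  have e4 : ShVal (T.erase i) W j = ∑ S ∈ T'.powerset,
      sh (n-1) S.card * (W (insert j S) - W S) := by
    unfold ShVal
    rw [← hT', hcardi]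
  rw [e1, e2, e3, e4, ← Finset.sum_sub_distrib, ← Finset.sum_sub_distrib]
  refine Finset.sum_congr rfl fun S hS => ?_
  have hs2 : S.card + 2 ≤ n := by
    have := Finset.card_le_card (Finset.mem_powerset.mp hS)
    omega
  linear_combination (W (insert i S) - W (insert j S)) * sh_succ_add hs2


lemma owen_collapse {m : ℕ} (V : Finset ℕ → ℝ) (B : Fin m → Finset ℕ) (d : Fin m → ℕ)
    (hd : ∀ k, 1 ≤ d k)
    (hdisj : ∀ k k', k ≠ k' → Disjoint (B k) (B k'))
    (hV : ∀ T, V T ≠ 0 → ∀ k, d k ≤ (T ∩ B k).card)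
    (p : Fin m) (i : ℕ) (hi : i ∈ B p) :
    Owen m V B i = (1 / m) *
      ShVal (B p) (fun S => V ((((univ : Finset (Fin m)).erase p).biUnion B) ∪ S)) i := by
  classical
  have hm : 0 < m := p.pos
  have hfilter : (univ : Finset (Fin m)).filter (fun k => i ∈ B k) = {p} := by
    ext k
    simp only [Finset.mem_filter, Finset.mem_univ, true_and, Finset.mem_singleton]
    constructor
    · intro hk
      by_contra hne
      exact (Finset.disjoint_left.mp (hdisj k p hne)) hk hi
    · rintro rfl; exact hi
  rw [Owen, hfilter, Finset.sum_singleton]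
  set Q : Finset ℕ := ((univ : Finset (Fin m)).erase p).biUnion B with hQdef
  have hvanish : ∀ R ∈ ((univ : Finset (Fin m)).erase p).powerset,
      R ≠ (univ : Finset (Fin m)).erase p →
      ∀ T : Finset ℕ, (∃ S ⊆ (B p).erase i, T = R.biUnion B ∪ S ∪ {i} ∨ T = R.biUnion B ∪ S) →
      V T = 0 := by
    intro R hR hne T ⟨S, hS, hT⟩
    rw [Finset.mem_powerset] at hR
    obtain ⟨q, hq_mem, hq_not⟩ := Finset.exists_of_ssubset (hR.ssubset_of_ne hne)
    have hqp : q ≠ p := Finset.ne_of_mem_erase hq_mem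
    have hTq : T ∩ B q = ∅ := by
      apply Finset.eq_empty_of_forall_notMem
      intro x hx
      obtain ⟨hxT, hxq⟩ := Finset.mem_inter.mp hx
      have hxT' : x ∈ R.biUnion B ∪ S ∪ {i} := by
        rcases hT with h | h <;> rw [h] at hxT
        · exact hxT
        · exact Finset.mem_union_left _ hxT
      rcases Finset.mem_union.mp hxT' with h1 | h2
      · rcases Finset.mem_union.mp h1 with h3 | h4
        · obtain ⟨r, hrR, hxr⟩ := Finset.mem_biUnion.mp h3
          have hrq : r ≠ q := fun h => hq_not (h ▸ hrR)
          exact (Finset.disjoint_left.mp (hdisj r q hrq)) hxr hxq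
        · have : x ∈ B p := (Finset.erase_subset _ _) (hS h4)
          exact (Finset.disjoint_left.mp (hdisj p q (Ne.symm hqp))) this hxq
      · have : x ∈ B p := Finset.mem_singleton.mp h2 ▸ hi
        exact (Finset.disjoint_left.mp (hdisj p q (Ne.symm hqp))) this hxq
    by_contra hV0
    have := hV T hV0 q
    rw [hTq] at this
    simp only [Finset.card_empty] at this
    exact absurd this (by have := hd q; omega)
  rw [Finset.sum_eq_single_of_mem ((univ : Finset (Fin m)).erase p)
      (Finset.mem_powerset_self _)]
  swap
  · intro R hR hne
    apply Finset.sum_eq_zero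
    intro S hS
    rw [Finset.mem_powerset] at hS
    have h1 : V (R.biUnion B ∪ S ∪ {i}) = 0 :=
      hvanish R hR hne _ ⟨S, hS, Or.inl rfl⟩
    have h2 : V (R.biUnion B ∪ S) = 0 :=
      hvanish R hR hne _ ⟨S, hS, Or.inr rfl⟩
    rw [h1, h2]
    ring
  have hcardR : ((univ : Finset (Fin m)).erase p).card = m - 1 := by
    rw [Finset.card_erase_of_mem (Finset.mem_univ p), Finset.card_univ, Fintype.card_fin]
  have hcoef : ((((univ : Finset (Fin m)).erase p).card.factorial : ℝ) *
      (m - ((univ : Finset (Fin m)).erase p).card - 1).factorial) / m.factorial = 1 / m := by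
    rw [hcardR]
    have h0 : m - (m - 1) - 1 = 0 := by omega
    rw [h0, Nat.factorial_zero]
    have h2 : (m : ℝ) * (m-1).factorial = m.factorial := by
      exact_mod_cast Nat.mul_factorial_pred hm.ne'
    push_cast
    rw [mul_one]
    rw [div_eq_div_iff (fact_cast_ne m) (by positivity)]
    linarith
  rw [ShVal, Finset.mul_sum]
  refine Finset.sum_congr rfl fun S hS => ?_
  rw [hcoef]
  have e1 : Q ∪ S ∪ {i} = Q ∪ insert i S := by
    rw [Finset.union_insert, Finset.union_comm (Q ∪ S) {i}, ← Finset.insert_eq]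
  rw [← hQdef, e1]
  simp only [sh]
  ring


/-! ### Structural lemmas -/

lemma IsGD.disj {G : DivGame} (hG : IsGD G) :
    ∀ k k', k ≠ k' → Disjoint (G.B k) (G.B k') := by
  intro k k' hne
  rw [Finset.disjoint_left]
  intro x hx hx'
  have hxN : x ∈ G.N := hG.2.1 k hx
  obtain ⟨u, _, huniq⟩ := hG.2.2.1 x hxN
  exact hne ((huniq k hx).trans (huniq k' hx').symm)

lemma IsGD.biUnion_eq {G : DivGame} (hG : IsGD G) :
    (univ : Finset (Fin G.m)).biUnion G.B = G.N := by
  apply Finset.Subset.antisymm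
  · intro x hx
    obtain ⟨k, _, hk⟩ := Finset.mem_biUnion.mp hx
    exact hG.2.1 k hk
  · intro x hx
    obtain ⟨k, hk, _⟩ := hG.2.2.1 x hx
    exact Finset.mem_biUnion.mpr ⟨k, Finset.mem_univ k, hk⟩

lemma restricted_vanish (G : DivGame) :
    ∀ T, restrictedGame G T ≠ 0 → ∀ k, G.d k ≤ (T ∩ G.B k).card := by
  intro T h k
  by_contra hc
  apply h
  rw [restrictedGame, if_neg]
  intro hdc
  exact hc (hdc k)

lemma diverseCoal_N {G : DivGame} (hG : IsGD G) : DiverseCoal G G.N := by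
  intro k
  rw [Finset.inter_eq_right.mpr (hG.2.1 k)]
  exact (hG.2.2.2 k).2

lemma DOw_collapse {G : DivGame} (hG : IsGD G) {p : Fin G.m} {i : ℕ} (hi : i ∈ G.B p) :
    DOw G i = (1 / G.m) * ShVal (G.B p)
      (fun S => restrictedGame G ((((univ : Finset (Fin G.m)).erase p).biUnion G.B) ∪ S)) i :=
  owen_collapse _ _ G.d (fun k => (hG.2.2.2 k).1) hG.disj (restricted_vanish G) p i hi

lemma Q_inter_Bp {G : DivGame} (hG : IsGD G) (p : Fin G.m) :
    (((univ : Finset (Fin G.m)).erase p).biUnion G.B) ∩ G.B p = ∅ := by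
  apply Finset.eq_empty_of_forall_notMem
  intro x hx
  obtain ⟨hxQ, hxp⟩ := Finset.mem_inter.mp hx
  obtain ⟨r, hr, hxr⟩ := Finset.mem_biUnion.mp hxQ
  exact (Finset.disjoint_left.mp (hG.disj r p (Finset.ne_of_mem_erase hr))) hxr hxp

lemma Q_union_Bp {G : DivGame} (hG : IsGD G) (p : Fin G.m) :
    (((univ : Finset (Fin G.m)).erase p).biUnion G.B) ∪ G.B p = G.N := by
  rw [← hG.biUnion_eq]
  conv_rhs => rw [← Finset.insert_erase (Finset.mem_univ p)]
  rw [Finset.biUnion_insert, Finset.union_comm]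

lemma restricted_Q_zero {G : DivGame} (hG : IsGD G) (p : Fin G.m) :
    restrictedGame G (((univ : Finset (Fin G.m)).erase p).biUnion G.B) = 0 := by
  rw [restrictedGame, if_neg]
  intro hdc
  have := hdc p
  rw [Q_inter_Bp hG p] at this
  simp only [Finset.card_empty] at this
  have := (hG.2.2.2 p).1
  omega

lemma DOw_comp_sum {G : DivGame} (hG : IsGD G) (p : Fin G.m) :
    ∑ i ∈ G.B p, DOw G i = (1 / G.m) * G.v G.N := by
  have h1 : ∀ i ∈ G.B p, DOw G i = (1 / G.m) * ShVal (G.B p)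
      (fun S => restrictedGame G ((((univ : Finset (Fin G.m)).erase p).biUnion G.B) ∪ S)) i :=
    fun i hi => DOw_collapse hG hi
  rw [Finset.sum_congr rfl h1, ← Finset.mul_sum, shapley_eff]
  rw [Q_union_Bp hG p, Finset.union_empty, restricted_Q_zero hG p, sub_zero]
  rw [restrictedGame, if_pos (diverseCoal_N hG)]

lemma pairwise_disj {G : DivGame} (hG : IsGD G) :
    Set.PairwiseDisjoint (↑(univ : Finset (Fin G.m))) G.B :=
  fun k _ k' _ hne => hG.disj k k' hne

lemma DOw_eff : Efficiency DOw := by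
  intro G hG
  rcases Nat.eq_zero_or_pos G.m with hm | hm
  · have hN : G.N = ∅ := by
      rw [← hG.biUnion_eq]
      apply Finset.eq_empty_of_forall_notMem
      intro x hx
      obtain ⟨k, _, _⟩ := Finset.mem_biUnion.mp hx
      exact absurd k.isLt (by omega)
    rw [hN, Finset.sum_empty, hG.1]
  · have hsplit : ∑ i ∈ (univ : Finset (Fin G.m)).biUnion G.B, DOw G i
        = ∑ k : Fin G.m, ∑ i ∈ G.B k, DOw G i := Finset.sum_biUnion (pairwise_disj hG)
    rw [← hG.biUnion_eq, hsplit, Finset.sum_congr rfl (fun k _ => DOw_comp_sum hG k)]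
    rw [Finset.sum_const, Finset.card_univ, Fintype.card_fin, nsmul_eq_mul, hG.biUnion_eq]
    have : (G.m : ℝ) ≠ 0 := Nat.cast_ne_zero.mpr (by omega)
    field_simp

lemma DOw_ED : ED DOw := by
  intro G hG k q
  rw [DOw_comp_sum hG k, DOw_comp_sum hG q]

lemma DOw_INDC : INDC DOw := by
  intro G v w hGv hGw hagree i _
  show Owen G.m (restrictedGame (gameWith G v)) G.B i
      = Owen G.m (restrictedGame (gameWith G w)) G.B i
  have hrw : ∀ T ⊆ G.N, restrictedGame (gameWith G v) T = restrictedGame (gameWith G w) T := by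
    intro T hT
    show (if DiverseCoal G T then v T else 0) = (if DiverseCoal G T then w T else 0)
    by_cases hdc : DiverseCoal G T
    · rw [if_pos hdc, if_pos hdc]
      exact hagree T hT hdc
    · rw [if_neg hdc, if_neg hdc]
  rw [Owen, Owen]
  refine Finset.sum_congr rfl fun k hk => ?_
  have hik : i ∈ G.B k := (Finset.mem_filter.mp hk).2
  refine Finset.sum_congr rfl fun R _ => ?_
  refine Finset.sum_congr rfl fun S hS => ?_
  have hBN : ∀ r, G.B r ⊆ G.N := hGv.2.1
  have hsub2 : R.biUnion G.B ∪ S ⊆ G.N :=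
    Finset.union_subset (Finset.biUnion_subset.mpr fun r _ => hBN r)
      ((Finset.mem_powerset.mp hS).trans ((Finset.erase_subset _ _).trans (hBN k)))
  have hsub1 : R.biUnion G.B ∪ S ∪ {i} ⊆ G.N :=
    Finset.union_subset hsub2 (Finset.singleton_subset_iff.mpr (hBN k hik))
  rw [hrw _ hsub1, hrw _ hsub2]

lemma restricted_drop {G : DivGame} (hG : IsGD G) {j : ℕ} :
    ∀ T, j ∉ T → restrictedGame (dropPlayer G j) T = restrictedGame G T := by
  intro T hjT
  have hinter : ∀ k, T ∩ (G.B k).erase j = T ∩ G.B k := by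
    intro k
    ext x
    simp only [Finset.mem_inter, Finset.mem_erase]
    exact ⟨fun ⟨h1, _, h3⟩ => ⟨h1, h3⟩, fun ⟨h1, h2⟩ => ⟨h1, fun he => hjT (he ▸ h1), h2⟩⟩
  have hdc : DiverseCoal (dropPlayer G j) T ↔ DiverseCoal G T := by
    constructor <;> intro h k
    · have h' := h k
      rwa [show T ∩ (dropPlayer G j).B k = T ∩ G.B k from hinter k] at h'
    · show G.d k ≤ (T ∩ (G.B k).erase j).card
      rw [hinter k]
      exact h k
  show (if DiverseCoal (dropPlayer G j) T then G.v T else 0)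
      = (if DiverseCoal G T then G.v T else 0)
  exact if_congr hdc rfl rfl


lemma j_not_in_Q {G : DivGame} (hG : IsGD G) {p : Fin G.m} {j : ℕ} (hj : j ∈ G.B p) :
    j ∉ ((univ : Finset (Fin G.m)).erase p).biUnion G.B := by
  intro hjQ
  obtain ⟨r, hr, hjr⟩ := Finset.mem_biUnion.mp hjQ
  exact (Finset.disjoint_left.mp (hG.disj r p (Finset.ne_of_mem_erase hr))) hjr hj

lemma Q_drop {G : DivGame} (hG : IsGD G) {p : Fin G.m} {j : ℕ} (hj : j ∈ G.B p) :
    ((univ : Finset (Fin G.m)).erase p).biUnion (fun k => (G.B k).erase j)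
      = ((univ : Finset (Fin G.m)).erase p).biUnion G.B := by
  apply Finset.biUnion_congr rfl
  intro k hk
  apply Finset.erase_eq_of_notMem
  exact fun hjk =>
    (Finset.disjoint_left.mp (hG.disj k p (Finset.ne_of_mem_erase hk))) hjk hj

lemma isGD_drop {G : DivGame} (hG : IsGD G) {p : Fin G.m} {j : ℕ} (hj : j ∈ G.B p)
    (hslack : G.d p < (G.B p).card) : IsGD (dropPlayer G j) := by
  refine ⟨hG.1, ?_, ?_, ?_⟩
  · intro k
    exact Finset.erase_subset_erase j (hG.2.1 k)
  · intro x hx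
    have hxj : x ≠ j := Finset.ne_of_mem_erase hx
    have hxN : x ∈ G.N := Finset.mem_of_mem_erase hx
    obtain ⟨k, hk, huniq⟩ := hG.2.2.1 x hxN
    refine ⟨k, Finset.mem_erase.mpr ⟨hxj, hk⟩, ?_⟩
    intro k' hk'
    exact huniq k' (Finset.mem_of_mem_erase hk')
  · intro k
    refine ⟨(hG.2.2.2 k).1, ?_⟩
    by_cases hkp : k = p
    · subst hkp
      have := Finset.card_erase_of_mem hj
      show G.d k ≤ ((G.B k).erase j).card
      omega
    · have hjk : j ∉ G.B k :=
        fun h => (Finset.disjoint_left.mp (hG.disj k p hkp)) h hj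
      show G.d k ≤ ((G.B k).erase j).card
      rw [Finset.erase_eq_of_notMem hjk]
      exact (hG.2.2.2 k).2

lemma diverse_drop {G : DivGame} (hdiv : IsDiverseGame G) (j : ℕ) :
    IsDiverseGame (dropPlayer G j) := by
  intro S hS hv
  have hjS : j ∉ S := fun h => (Finset.notMem_erase j G.N) (hS h)
  have hSN : S ⊆ G.N := hS.trans (Finset.erase_subset _ _)
  have := hdiv S hSN hv
  intro k
  show G.d k ≤ (S ∩ (G.B k).erase j).card
  have hinter : S ∩ (G.B k).erase j = S ∩ G.B k := by
    ext x
    simp only [Finset.mem_inter, Finset.mem_erase]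
    exact ⟨fun ⟨h1, _, h3⟩ => ⟨h1, h3⟩, fun ⟨h1, h2⟩ => ⟨h1, fun he => hjS (he ▸ h1), h2⟩⟩
  rw [hinter]
  exact this k

lemma DOw_drop_collapse {G : DivGame} (hG : IsGD G) {p : Fin G.m} {i j : ℕ}
    (hip : i ∈ G.B p) (hjp : j ∈ G.B p) (hij : i ≠ j) :
    DOw (dropPlayer G j) i = (1 / G.m) * ShVal ((G.B p).erase j)
      (fun S => restrictedGame G ((((univ : Finset (Fin G.m)).erase p).biUnion G.B) ∪ S)) i := by
  have hd' : ∀ k, 1 ≤ (dropPlayer G j).d k := fun k => (hG.2.2.2 k).1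
  have hdisj' : ∀ k k', k ≠ k' → Disjoint ((dropPlayer G j).B k) ((dropPlayer G j).B k') :=
    fun k k' hne => Disjoint.mono (Finset.erase_subset _ _) (Finset.erase_subset _ _)
      (hG.disj k k' hne)
  have hi' : i ∈ (dropPlayer G j).B p := Finset.mem_erase.mpr ⟨hij, hip⟩
  have hcoll := owen_collapse (restrictedGame (dropPlayer G j)) (dropPlayer G j).B
    (dropPlayer G j).d hd' hdisj' (restricted_vanish _) p i hi'
  have hcoll' : DOw (dropPlayer G j) i = (1 / (G.m : ℝ)) * ShVal ((G.B p).erase j)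
      (fun S => restrictedGame (dropPlayer G j)
        ((((univ : Finset (Fin G.m)).erase p).biUnion (fun k => (G.B k).erase j)) ∪ S)) i := hcoll
  rw [hcoll']
  congr 1
  simp only [ShVal]
  have hQd : ((univ : Finset (Fin G.m)).erase p).biUnion (fun k => (G.B k).erase j)
      = ((univ : Finset (Fin G.m)).erase p).biUnion G.B := Q_drop hG hjp
  refine Finset.sum_congr rfl fun S hS => ?_
  have hSsub : S ⊆ ((G.B p).erase j).erase i := by
    have := Finset.mem_powerset.mp hS
    exact this
  have hjS : j ∉ S := fun h =>
    (Finset.notMem_erase j (G.B p)) (Finset.mem_of_mem_erase (hSsub h))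
  have hjQ : j ∉ ((univ : Finset (Fin G.m)).erase p).biUnion G.B := j_not_in_Q hG hjp
  have h1 : j ∉ ((univ : Finset (Fin G.m)).erase p).biUnion G.B ∪ insert i S := by
    simp only [Finset.mem_union, Finset.mem_insert]
    push_neg
    exact ⟨hjQ, Ne.symm hij, hjS⟩
  have h2 : j ∉ ((univ : Finset (Fin G.m)).erase p).biUnion G.B ∪ S := by
    simp only [Finset.mem_union]
    push_neg
    exact ⟨hjQ, hjS⟩
  rw [hQd, restricted_drop hG _ h1, restricted_drop hG _ h2]

lemma DOw_IBC : IBCOPPDweak DOw := by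
  constructor
  · intro G hG _ p i hip j hjp hij _
    have e1 := DOw_collapse hG hip
    have e2 := DOw_collapse hG hjp
    have e3 := DOw_drop_collapse hG hip hjp hij
    have e4 := DOw_drop_collapse hG hjp hip hij.symm
    rw [e1, e2, e3, e4]
    have hbc := sh_bc (G.B p)
      (fun S => restrictedGame G ((((univ : Finset (Fin G.m)).erase p).biUnion G.B) ∪ S))
      hip hjp hij
    linear_combination (1 / (G.m : ℝ)) * hbc
  · intro G _ hv0 k _
    show Owen G.m (restrictedGame G) G.B k = 0
    have hz : ∀ T, restrictedGame G T = 0 := by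
      intro T
      rw [restrictedGame, hv0]
      simp
    rw [Owen]
    apply Finset.sum_eq_zero
    intro x _
    apply Finset.sum_eq_zero
    intro R _
    apply Finset.sum_eq_zero
    intro S _
    rw [hz, hz]
    ring


/-! ### Uniqueness -/

def GoodValue (f : Value) : Prop :=
  Efficiency f ∧ IBCOPPDweak f ∧ ED f ∧ INDC f

lemma isGD_gameWith {G : DivGame} (hG : IsGD G) {w : Finset ℕ → ℝ} (hw : w ∅ = 0) :
    IsGD (gameWith G w) :=
  ⟨hw, hG.2.1, hG.2.2.1, hG.2.2.2⟩

lemma good_comp_sum {f : Value} (hf : GoodValue f) {G : DivGame} (hG : IsGD G) (p : Fin G.m) :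
    ∑ i ∈ G.B p, f G i = G.v G.N / G.m := by
  have hm : 0 < G.m := p.pos
  have h1 : ∑ k : Fin G.m, ∑ i ∈ G.B k, f G i = G.v G.N := by
    rw [← Finset.sum_biUnion (pairwise_disj hG), hG.biUnion_eq]
    exact hf.1 G hG
  rw [Finset.sum_congr rfl (fun k _ => hf.2.2.1 G hG k p)] at h1
  rw [Finset.sum_const, Finset.card_univ, Fintype.card_fin, nsmul_eq_mul] at h1
  have hmne : (G.m : ℝ) ≠ 0 := Nat.cast_ne_zero.mpr (by omega)
  field_simp
  linarith

lemma isGD_add {G : DivGame} (hG : IsGD G) (p : Fin G.m) {l : ℕ} (hl : l ∉ G.N) :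
    IsGD (addPlayer G p l) := by
  have hlBp : ∀ k, l ∉ G.B k := fun k h => hl (hG.2.1 k h)
  have hBadd : ∀ k : Fin G.m, (addPlayer G p l).B k = if k = p then insert l (G.B p) else G.B k :=
    fun k => rfl
  refine ⟨?_, ?_, ?_, ?_⟩
  · show G.v ((∅ : Finset ℕ).erase l) = 0
    rw [Finset.erase_empty]
    exact hG.1
  · intro (k : Fin G.m)
    show (addPlayer G p l).B k ⊆ insert l G.N
    rw [hBadd k]
    by_cases hkp : k = p
    · rw [if_pos hkp]
      exact Finset.insert_subset_insert l (hG.2.1 p)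
    · rw [if_neg hkp]
      exact (hG.2.1 k).trans (Finset.subset_insert l G.N)
  · intro x hx
    have hx' : x ∈ insert l G.N := hx
    rcases Finset.mem_insert.mp hx' with hxl | hxN
    · refine ⟨p, ?_, ?_⟩
      · show x ∈ (addPlayer G p l).B p
        rw [hBadd p, if_pos rfl, hxl]
        exact Finset.mem_insert_self l _
      · intro (k : Fin G.m) hk
        rw [hBadd k] at hk
        by_contra hkp
        rw [if_neg (show ¬ (k = p) from hkp)] at hk
        exact hlBp k (hxl ▸ hk)
    · obtain ⟨k, hk, huniq⟩ := hG.2.2.1 x hxN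
      have hxl : x ≠ l := fun h => hl (h ▸ hxN)
      refine ⟨k, ?_, ?_⟩
      · show x ∈ (addPlayer G p l).B k
        rw [hBadd k]
        by_cases hkp : k = p
        · rw [if_pos hkp]
          exact Finset.mem_insert_of_mem (hkp ▸ hk)
        · rw [if_neg hkp]
          exact hk
      · intro (k' : Fin G.m) hk'
        rw [hBadd k'] at hk'
        by_cases hkp : k' = p
        · rw [if_pos hkp] at hk'
          rcases Finset.mem_insert.mp hk' with h | h
          · exact absurd h hxl
          · exact huniq k' (by rw [hkp]; exact h)
        · rw [if_neg hkp] at hk'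
          exact huniq k' hk'
  · intro (k : Fin G.m)
    refine ⟨(hG.2.2.2 k).1, ?_⟩
    show G.d k ≤ ((addPlayer G p l).B k).card
    rw [hBadd k]
    by_cases hkp : k = p
    · rw [if_pos hkp, Finset.card_insert_of_notMem (hlBp p), hkp]
      exact ((hG.2.2.2 p).2).trans (Nat.le_succ _)
    · rw [if_neg hkp]
      exact (hG.2.2.2 k).2

lemma diverse_add {G : DivGame} (hG : IsGD G) (hdiv : IsDiverseGame G) (p : Fin G.m)
    {l : ℕ} (hl : l ∉ G.N) : IsDiverseGame (addPlayer G p l) := by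
  intro S hS hv
  have hv' : G.v (S.erase l) ≠ 0 := hv
  have hSN : S.erase l ⊆ G.N := by
    intro x hx
    obtain ⟨hxl, hxS⟩ := Finset.mem_erase.mp hx
    rcases Finset.mem_insert.mp (hS hxS) with h | h
    · exact absurd h hxl
    · exact h
  have hd := hdiv _ hSN hv'
  intro (k : Fin G.m)
  show G.d k ≤ (S ∩ (if k = p then insert l (G.B p) else G.B k)).card
  have hmono : S.erase l ∩ G.B k ⊆ S ∩ (if k = p then insert l (G.B p) else G.B k) := by
    intro x hx
    obtain ⟨hx1, hx2⟩ := Finset.mem_inter.mp hx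
    refine Finset.mem_inter.mpr ⟨Finset.mem_of_mem_erase hx1, ?_⟩
    by_cases hkp : k = p
    · rw [if_pos hkp]
      exact Finset.mem_insert_of_mem (hkp ▸ hx2)
    · rw [if_neg hkp]
      exact hx2
  exact (hd k).trans (Finset.card_le_card hmono)

lemma drop_add_eq {G : DivGame} (hG : IsGD G) (p : Fin G.m) {l : ℕ} (hl : l ∉ G.N) :
    dropPlayer (addPlayer G p l) l = gameWith G (fun S => G.v (S.erase l)) := by
  have hlBp : ∀ k, l ∉ G.B k := fun k h => hl (hG.2.1 k h)
  unfold dropPlayer addPlayer gameWith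
  congr 1
  · exact Finset.erase_insert hl
  · funext k
    show (if k = p then insert l (G.B p) else G.B k).erase l = G.B k
    by_cases hkp : k = p
    · rw [if_pos hkp, Finset.erase_insert (hlBp p), hkp]
    · rw [if_neg hkp, Finset.erase_eq_of_notMem (hlBp k)]

lemma f_drop_add {f : Value} (hf : GoodValue f) {G : DivGame} (hG : IsGD G) (p : Fin G.m)
    {l : ℕ} (hl : l ∉ G.N) : ∀ i ∈ G.N, f (dropPlayer (addPlayer G p l) l) i = f G i := by
  intro i hi
  rw [drop_add_eq hG p hl]
  have hv0 : G.v ((∅ : Finset ℕ).erase l) = 0 := by rw [Finset.erase_empty]; exact hG.1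
  have hagree : ∀ S ⊆ G.N, DiverseCoal G S → G.v (S.erase l) = G.v S := by
    intro S hS _
    rw [Finset.erase_eq_of_notMem (fun h => hl (hS h))]
  exact hf.2.2.2 G (fun S => G.v (S.erase l)) G.v (isGD_gameWith hG hv0)
    (isGD_gameWith hG hG.1) hagree i hi

lemma add_tight_vanish {G : DivGame} (hG : IsGD G) (hdiv : IsDiverseGame G) {p : Fin G.m}
    (ht : G.d p = (G.B p).card) {l : ℕ} (hl : l ∉ G.N) {i : ℕ} (hip : i ∈ G.B p) :
    ∀ S ⊆ (dropPlayer (addPlayer G p l) i).N, DiverseCoal (dropPlayer (addPlayer G p l) i) S →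
      (addPlayer G p l).v S = 0 := by
  intro S hS hdc
  show G.v (S.erase l) = 0
  by_contra hv
  have hSN : S.erase l ⊆ G.N := by
    intro x hx
    obtain ⟨hxl, hxS⟩ := Finset.mem_erase.mp hx
    have hx2 : x ∈ insert l G.N := Finset.mem_of_mem_erase (hS hxS)
    rcases Finset.mem_insert.mp hx2 with h | h
    · exact absurd h hxl
    · exact h
  have hiS : i ∉ S := fun h => (Finset.notMem_erase i _) (hS h)
  have h1 := hdiv _ hSN hv p
  have hsub : S.erase l ∩ G.B p ⊆ (G.B p).erase i := by
    intro x hx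
    obtain ⟨hx1, hx2⟩ := Finset.mem_inter.mp hx
    exact Finset.mem_erase.mpr
      ⟨fun h => hiS (h ▸ Finset.mem_of_mem_erase hx1), hx2⟩
  have hcard : (S.erase l ∩ G.B p).card ≤ (G.B p).card - 1 :=
    (Finset.card_le_card hsub).trans (Finset.card_erase_of_mem hip).le
  have hBp1 : 1 ≤ (G.B p).card := Finset.card_pos.mpr ⟨i, hip⟩
  omega

lemma f_drop_add_zero {f : Value} (hf : GoodValue f) {G : DivGame} (hG : IsGD G)
    (hdiv : IsDiverseGame G) {p : Fin G.m} (ht : G.d p = (G.B p).card)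
    {l : ℕ} (hl : l ∉ G.N) {i : ℕ} (hip : i ∈ G.B p) :
    ∀ j ∈ (dropPlayer (addPlayer G p l) i).N, f (dropPlayer (addPlayer G p l) i) j = 0 := by
  intro j hj
  have hlBp : l ∉ G.B p := fun h => hl (hG.2.1 p h)
  have hGDadd : IsGD (addPlayer G p l) := isGD_add hG p hl
  have hiadd : i ∈ (addPlayer G p l).B p := by
    show i ∈ if p = p then insert l (G.B p) else G.B p
    rw [if_pos rfl]
    exact Finset.mem_insert_of_mem hip
  have hslack : (addPlayer G p l).d p < ((addPlayer G p l).B p).card := by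
    show G.d p < (if p = p then insert l (G.B p) else G.B p).card
    rw [if_pos rfl, Finset.card_insert_of_notMem hlBp]
    omega
  have hGDH : IsGD (dropPlayer (addPlayer G p l) i) := isGD_drop hGDadd hiadd hslack
  have h1 : f (dropPlayer (addPlayer G p l) i) j
      = f (gameWith (dropPlayer (addPlayer G p l) i) (fun _ => 0)) j := by
    exact hf.2.2.2 (dropPlayer (addPlayer G p l) i) (dropPlayer (addPlayer G p l) i).v
      (fun _ => 0) hGDH (isGD_gameWith hGDH rfl)
      (fun S hS hdc => add_tight_vanish hG hdiv ht hl hip S hS hdc) j hj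
  rw [h1]
  exact hf.2.1.2 (gameWith (dropPlayer (addPlayer G p l) i) (fun _ => 0))
    (isGD_gameWith hGDH rfl) rfl j hj


lemma tight_eq {f : Value} (hf : GoodValue f) {G : DivGame} (hG : IsGD G)
    (hdiv : IsDiverseGame G) {p : Fin G.m} (ht : G.d p = (G.B p).card)
    {i j : ℕ} (hip : i ∈ G.B p) (hjp : j ∈ G.B p) : f G i = f G j := by
  by_cases hij : i = j
  · rw [hij]
  obtain ⟨l, hl⟩ := Infinite.exists_notMem_finset G.N
  have hlBp : l ∉ G.B p := fun h => hl (hG.2.1 p h)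
  have hgd' := isGD_add hG p hl
  have hdiv' := diverse_add hG hdiv p hl
  have hiN : i ∈ G.N := hG.2.1 p hip
  have hjN : j ∈ G.N := hG.2.1 p hjp
  have hil : i ≠ l := fun h => hl (h ▸ hiN)
  have hjl : j ≠ l := fun h => hl (h ▸ hjN)
  have hip' : i ∈ (addPlayer G p l).B p := by
    show i ∈ if p = p then insert l (G.B p) else G.B p
    rw [if_pos rfl]
    exact Finset.mem_insert_of_mem hip
  have hjp' : j ∈ (addPlayer G p l).B p := by
    show j ∈ if p = p then insert l (G.B p) else G.B p
    rw [if_pos rfl]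
    exact Finset.mem_insert_of_mem hjp
  have hlp' : l ∈ (addPlayer G p l).B p := by
    show l ∈ if p = p then insert l (G.B p) else G.B p
    rw [if_pos rfl]
    exact Finset.mem_insert_self l _
  have hslack : (addPlayer G p l).d p < ((addPlayer G p l).B p).card := by
    show G.d p < (if p = p then insert l (G.B p) else G.B p).card
    rw [if_pos rfl, Finset.card_insert_of_notMem hlBp]
    omega
  have hbc := hf.2.1.1
  have r1 := hbc _ hgd' hdiv' p i hip' j hjp' hij hslack
  have r2 := hbc _ hgd' hdiv' p i hip' l hlp' hil hslack
  have r3 := hbc _ hgd' hdiv' p j hjp' l hlp' hjl hslack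
  have z1 : f (dropPlayer (addPlayer G p l) j) i = 0 :=
    f_drop_add_zero hf hG hdiv ht hl hjp i
      (Finset.mem_erase.mpr ⟨hij, Finset.mem_insert_of_mem hiN⟩)
  have z2 : f (dropPlayer (addPlayer G p l) i) j = 0 :=
    f_drop_add_zero hf hG hdiv ht hl hip j
      (Finset.mem_erase.mpr ⟨fun h => hij h.symm, Finset.mem_insert_of_mem hjN⟩)
  have z3 : f (dropPlayer (addPlayer G p l) i) l = 0 :=
    f_drop_add_zero hf hG hdiv ht hl hip l
      (Finset.mem_erase.mpr ⟨fun h => hil h.symm, Finset.mem_insert_self l _⟩)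
  have z4 : f (dropPlayer (addPlayer G p l) j) l = 0 :=
    f_drop_add_zero hf hG hdiv ht hl hjp l
      (Finset.mem_erase.mpr ⟨fun h => hjl h.symm, Finset.mem_insert_self l _⟩)
  have h5 : f (dropPlayer (addPlayer G p l) l) i = f G i := f_drop_add hf hG p hl i hiN
  have h6 : f (dropPlayer (addPlayer G p l) l) j = f G j := f_drop_add hf hG p hl j hjN
  rw [z1, z2] at r1
  rw [h5, z3] at r2
  rw [h6, z4] at r3
  linarith

lemma slack_rec {f : Value} (hf : GoodValue f) {G : DivGame} (hG : IsGD G)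
    (hdiv : IsDiverseGame G) {p : Fin G.m} {i : ℕ} (hip : i ∈ G.B p)
    (hs : G.d p < (G.B p).card) :
    ((G.B p).card : ℝ) * f G i
      = G.v G.N / G.m - G.v (G.N.erase i) / G.m
        + ∑ j ∈ (G.B p).erase i, f (dropPlayer G j) i := by
  have hrel : ∀ j ∈ (G.B p).erase i,
      f G i - f (dropPlayer G j) i = f G j - f (dropPlayer G i) j := by
    intro j hj
    exact hf.2.1.1 G hG hdiv p i hip j (Finset.mem_of_mem_erase hj)
      (fun h => (Finset.ne_of_mem_erase hj) h.symm) hs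
  have hsum : ∑ j ∈ (G.B p).erase i, (f G i - f (dropPlayer G j) i)
      = ∑ j ∈ (G.B p).erase i, (f G j - f (dropPlayer G i) j) :=
    Finset.sum_congr rfl hrel
  rw [Finset.sum_sub_distrib, Finset.sum_sub_distrib, Finset.sum_const, nsmul_eq_mul] at hsum
  have hcomp := good_comp_sum hf hG p
  have h1 : ∑ j ∈ (G.B p).erase i, f G j = G.v G.N / G.m - f G i := by
    rw [← Finset.add_sum_erase _ _ hip] at hcomp
    linarith
  have hGDdrop := isGD_drop hG hip hs
  have h2 : ∑ j ∈ (G.B p).erase i, f (dropPlayer G i) j = G.v (G.N.erase i) / G.m :=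
    good_comp_sum hf hGDdrop p
  have hc1 : 1 ≤ (G.B p).card := Finset.card_pos.mpr ⟨i, hip⟩
  have hcast : (((G.B p).erase i).card : ℝ) = ((G.B p).card : ℝ) - 1 := by
    rw [Finset.card_erase_of_mem hip]
    push_cast [Nat.cast_sub hc1]
    ring
  rw [hcast, h1, h2] at hsum
  linarith

lemma agree {f g : Value} (hf : GoodValue f) (hg : GoodValue g) :
    ∀ (n : ℕ) (G : DivGame), G.N.card = n → IsGD G → IsDiverseGame G →
      ∀ i ∈ G.N, f G i = g G i := by
  intro n
  induction n using Nat.strong_induction_on with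
  | _ n IH =>
    intro G hn hG hdiv i hi
    obtain ⟨p, hp, _⟩ := hG.2.2.1 i hi
    have hcne : ((G.B p).card : ℝ) ≠ 0 :=
      Nat.cast_ne_zero.mpr (Finset.card_pos.mpr ⟨i, hp⟩).ne'
    rcases eq_or_lt_of_le (hG.2.2.2 p).2 with ht | hs
    · have hcf := good_comp_sum hf hG p
      have hcg := good_comp_sum hg hG p
      rw [Finset.sum_congr rfl (fun j hj => tight_eq hf hG hdiv ht hj hp),
        Finset.sum_const, nsmul_eq_mul] at hcf
      rw [Finset.sum_congr rfl (fun j hj => tight_eq hg hG hdiv ht hj hp),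
        Finset.sum_const, nsmul_eq_mul] at hcg
      exact mul_left_cancel₀ hcne (hcf.trans hcg.symm)
    · have e1 := slack_rec hf hG hdiv hp hs
      have e2 := slack_rec hg hG hdiv hp hs
      have hdropeq : ∀ j ∈ (G.B p).erase i, f (dropPlayer G j) i = g (dropPlayer G j) i := by
        intro j hj
        have hjp := Finset.mem_of_mem_erase hj
        have hjN : j ∈ G.N := hG.2.1 p hjp
        have hGD' := isGD_drop hG hjp hs
        have hdiv' := diverse_drop hdiv j
        have hcard' : (dropPlayer G j).N.card = G.N.card - 1 := Finset.card_erase_of_mem hjN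
        have hpos : 0 < G.N.card := Finset.card_pos.mpr ⟨i, hi⟩
        exact IH (G.N.card - 1) (by omega) (dropPlayer G j) hcard' hGD' hdiv' i
          (Finset.mem_erase.mpr ⟨fun h => (Finset.ne_of_mem_erase hj) h.symm, hi⟩)
      rw [Finset.sum_congr rfl hdropeq] at e1
      exact mul_left_cancel₀ hcne (e1.trans e2.symm)

/-- the Diversity Owen value is the unique value on GD satisfying
E, IBCOPPD⁻, ED and INDC. -/
theorem diversityOwen_characterization_weak :
    (Efficiency DOw ∧ IBCOPPDweak DOw ∧ ED DOw ∧ INDC DOw) ∧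
    (∀ f : Value, Efficiency f → IBCOPPDweak f → ED f → INDC f →
      ∀ G, IsGD G → ∀ i ∈ G.N, f G i = DOw G i) := by
  have hg : GoodValue DOw := ⟨DOw_eff, DOw_IBC, DOw_ED, DOw_INDC⟩
  refine ⟨⟨DOw_eff, DOw_IBC, DOw_ED, DOw_INDC⟩, ?_⟩
  intro f hE hIBC hED hINDC G hG i hi
  have hf : GoodValue f := ⟨hE, hIBC, hED, hINDC⟩
  have hVd0 : restrictedGame G ∅ = 0 := by
    show (if DiverseCoal G ∅ then G.v ∅ else 0) = 0
    by_cases hdc : DiverseCoal G ∅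
    · rw [if_pos hdc]; exact hG.1
    · rw [if_neg hdc]
  have hGD' : IsGD (gameWith G (restrictedGame G)) := isGD_gameWith hG hVd0
  have hdiv' : IsDiverseGame (gameWith G (restrictedGame G)) := by
    intro S _ hv
    exact fun k => restricted_vanish G S hv k
  have hagree : ∀ S ⊆ G.N, DiverseCoal G S → G.v S = restrictedGame G S := by
    intro S _ hdc
    show G.v S = if DiverseCoal G S then G.v S else 0
    rw [if_pos hdc]
  have step1 : f G i = f (gameWith G (restrictedGame G)) i :=
    hINDC G G.v (restrictedGame G) (isGD_gameWith hG hG.1) hGD' hagree i hi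
  have step2 : f (gameWith G (restrictedGame G)) i = DOw (gameWith G (restrictedGame G)) i :=
    agree hf hg (gameWith G (restrictedGame G)).N.card (gameWith G (restrictedGame G))
      rfl hGD' hdiv' i hi
  have step3 : DOw (gameWith G (restrictedGame G)) i = DOw G i := by
    show Owen G.m (restrictedGame (gameWith G (restrictedGame G))) G.B i
        = Owen G.m (restrictedGame G) G.B i
    have hre : restrictedGame (gameWith G (restrictedGame G)) = restrictedGame G := by
      funext T
      show (if DiverseCoal G T then restrictedGame G T else 0) = restrictedGame G T
      by_cases hdc : DiverseCoal G T
      · rw [if_pos hdc]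
      · rw [if_neg hdc]
        show (0:ℝ) = if DiverseCoal G T then G.v T else 0
        rw [if_neg hdc]
    rw [hre]
  rw [step1, step2, step3]
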